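/- arXiv:1109.5124 — 5 statements merged into one kernel-verified Lean document; each statement's English description precedes it below -/
import Mathlib

section
/- Let a > 1 and define g(x) = 1 - x + (1/a)(x - x²)·log(1 - a/x) for x > a. Then g(x) → a/2 as x → +∞. -/
/-!
Substituting `t = a / x`, the function becomes
`1 + log (1 - t) / t - a * (log (1 - t) + t) / t ^ 2`, and `t → 0` with `t ≠ 0`.
The second-order expansion `log (1 - t) = -t - t ^ 2 / 2 + O(t ^ 3)` sends the two quotients
to `-1` and `-1/2`, so the limit is `1 - 1 + a / 2`.
-/

open Real Filter Topology

theorem abs_log_one_sub_add_add_sq_div_two_le {t : ℝ} (ht : |t| < 1) :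
    |log (1 - t) + t + t ^ 2 / 2| ≤ |t| ^ 3 / (1 - |t|) := by
  have h := abs_log_sub_add_sum_range_le ht 2
  norm_num [Finset.sum_range_succ] at h
  convert h using 2
  ring

theorem tendsto_log_one_sub_add_self_div_sq :
    Tendsto (fun t : ℝ => (log (1 - t) + t) / t ^ 2) (𝓝[≠] 0) (𝓝 (-1 / 2)) := by
  have hbound : Tendsto (fun t : ℝ => |t| / (1 - |t|)) (𝓝[≠] 0) (𝓝 0) := by
    have h : ContinuousAt (fun t : ℝ => |t| / (1 - |t|)) 0 :=
      continuousAt_id.abs.div (continuousAt_const.sub continuousAt_id.abs) (by norm_num)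
    simpa using h.tendsto.mono_left nhdsWithin_le_nhds
  refine tendsto_iff_norm_sub_tendsto_zero.2 (squeeze_zero_norm' ?_ hbound)
  have hsmall : ∀ᶠ t : ℝ in 𝓝[≠] 0, |t| < 1 := nhdsWithin_le_nhds <| by
    simpa [Metric.ball, Real.dist_eq] using Metric.ball_mem_nhds (0 : ℝ) one_pos
  filter_upwards [hsmall, self_mem_nhdsWithin] with t ht (ht0 : t ≠ 0)
  rw [norm_norm]
  calc ‖(log (1 - t) + t) / t ^ 2 - -1 / 2‖ = |(log (1 - t) + t + t ^ 2 / 2) / t ^ 2| := by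
        rw [Real.norm_eq_abs]; congr 1; field_simp; ring
    _ = |log (1 - t) + t + t ^ 2 / 2| / |t| ^ 2 := by rw [abs_div, abs_pow]
    _ ≤ |t| ^ 3 / (1 - |t|) / |t| ^ 2 := by
        gcongr; exact abs_log_one_sub_add_add_sq_div_two_le ht
    _ = |t| / (1 - |t|) := by field_simp

theorem tendsto_log_one_sub_div_self :
    Tendsto (fun t : ℝ => log (1 - t) / t) (𝓝[≠] 0) (𝓝 (-1)) := by
  -- `log (1 - t) / t = t * ((log (1 - t) + t) / t ^ 2) - 1`
  have h := (tendsto_id.mono_left nhdsWithin_le_nhds).mul tendsto_log_one_sub_add_self_div_sq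
  have h' := h.sub_const 1
  simp only [id, zero_mul, zero_sub] at h'
  refine h'.congr' ?_
  filter_upwards [self_mem_nhdsWithin] with t (ht : t ≠ 0)
  field_simp
  ring

theorem tendsto_div_atTop_nhdsNE_zero {a : ℝ} (ha : a ≠ 0) :
    Tendsto (fun x : ℝ => a / x) atTop (𝓝[≠] 0) :=
  tendsto_nhdsWithin_iff.2 ⟨tendsto_const_nhds.div_atTop tendsto_id,
    (eventually_gt_atTop 0).mono fun _ hx => div_ne_zero ha hx.ne'⟩

theorem tendsto_one_sub_add_mul_log_one_sub_div {a : ℝ} (ha : a ≠ 0) :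
    Tendsto (fun x : ℝ => 1 - x + (1/a) * (x - x^2) * Real.log (1 - a/x)) atTop (𝓝 (a/2)) := by
  have hlim : Tendsto (fun t : ℝ => 1 + log (1 - t) / t - a * ((log (1 - t) + t) / t ^ 2))
      (𝓝[≠] 0) (𝓝 (a / 2)) := by
    convert (tendsto_log_one_sub_div_self.const_add 1).sub
      (tendsto_log_one_sub_add_self_div_sq.const_mul a) using 2
    ring
  refine (hlim.comp (tendsto_div_atTop_nhdsNE_zero ha)).congr' ?_
  filter_upwards [eventually_ne_atTop 0] with x hx
  simp only [Function.comp_apply]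
  field_simp
  ring

/-- Let `a > 1` and `g(x) = 1 - x + (1/a)*(x - x^2)*log(1 - a/x)` for `x > a`.
Then `g(x) → a/2` as `x → +∞`. -/
theorem g_limit_atTop (a : ℝ) (ha : 1 < a) :
    Tendsto (fun x : ℝ => 1 - x + (1/a) * (x - x^2) * Real.log (1 - a/x))
      atTop (nhds (a/2)) :=
  tendsto_one_sub_add_mul_log_one_sub_div (by positivity)
end

section
/- Let a ≥ 3/2 and g(x) = 1 - x + (1/a)(x-x²)·log(1-a/x). Then g is strictly decreasing on (a, ∞). -/
/-!
With `u = 1 - a / x ∈ (0, 1)` one has the identity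
`a² (x - a) g'(x) = x² (B(u) - (a - 3/2) A(u))`, where `A(u) = 1 - u² + 2u log u` and
`B(u) = -1/2 - 2u + (5/2)u² - (2u + u²) log u`. Both vanish at `u = 1`; differentiating
(twice for `B`) reduces `A > 0` and `B < 0` on `(0, 1)` to `log y < y - 1`, applied to `u` and
to `1/u`. Hence `g' < 0` as soon as `a ≥ 3/2`.
-/

open Real Set

lemma lt_of_hasDerivAt_pos_on_Ioc {f f' : ℝ → ℝ} {a b x : ℝ}
    (hf : ∀ y ∈ Ioc a b, HasDerivAt f (f' y) y) (hf' : ∀ y ∈ Ioo a b, 0 < f' y)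
    (hx : x ∈ Ioo a b) : f x < f b := by
  refine strictMonoOn_of_hasDerivWithinAt_pos (f' := f') (convex_Ioc a b)
    (fun y hy ↦ (hf y hy).continuousAt.continuousWithinAt) (fun y hy ↦ ?_) (fun y hy ↦ ?_)
    (Ioo_subset_Ioc_self hx) (right_mem_Ioc.2 (hx.1.trans hx.2)) hx.2
  · rw [interior_Ioc] at hy ⊢
    exact (hf y (Ioo_subset_Ioc_self hy)).hasDerivWithinAt
  · rw [interior_Ioc] at hy
    exact hf' y hy

lemma lt_of_hasDerivAt_neg_on_Ioc {f f' : ℝ → ℝ} {a b x : ℝ}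
    (hf : ∀ y ∈ Ioc a b, HasDerivAt f (f' y) y) (hf' : ∀ y ∈ Ioo a b, f' y < 0)
    (hx : x ∈ Ioo a b) : f b < f x :=
  neg_lt_neg_iff.1 <| lt_of_hasDerivAt_pos_on_Ioc (f := fun y ↦ -f y) (f' := fun y ↦ -f' y)
    (fun y hy ↦ (hf y hy).neg) (fun y hy ↦ neg_pos.2 (hf' y hy)) hx

lemma one_sub_sq_add_two_mul_mul_log_pos {u : ℝ} (hu : u ∈ Ioo 0 1) :
    0 < 1 - u ^ 2 + 2 * u * log u := by
  have hderiv : ∀ y ∈ Ioc (0 : ℝ) 1, HasDerivAt (fun y ↦ 1 - y ^ 2 + 2 * y * log y)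
      (2 * (log y - (y - 1))) y := by
    intro y hy
    refine (((hasDerivAt_pow 2 y).const_sub 1).fun_add
      (((hasDerivAt_id' y).const_mul 2).fun_mul (hasDerivAt_log hy.1.ne'))).congr_deriv ?_
    have := hy.1.ne'
    field_simp
    ring
  simpa using lt_of_hasDerivAt_neg_on_Ioc hderiv
    (fun y hy ↦ by linarith [log_lt_sub_one_of_pos hy.1 hy.2.ne]) hu

lemma four_mul_sub_four_sub_mul_log_pos {u : ℝ} (hu : u ∈ Ioo 0 1) :
    0 < 4 * u - 4 - (2 + 2 * u) * log u := by
  have hderiv : ∀ y ∈ Ioc (0 : ℝ) 1, HasDerivAt (fun y ↦ 4 * y - 4 - (2 + 2 * y) * log y)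
      (2 * (log y⁻¹ - (y⁻¹ - 1))) y := by
    intro y hy
    refine ((((hasDerivAt_id' y).const_mul 4).sub_const 4).fun_sub
      ((((hasDerivAt_id' y).const_mul 2).const_add 2).fun_mul
        (hasDerivAt_log hy.1.ne'))).congr_deriv ?_
    rw [log_inv]
    have := hy.1.ne'
    field_simp
    ring
  have hneg : ∀ y ∈ Ioo (0 : ℝ) 1, 2 * (log y⁻¹ - (y⁻¹ - 1)) < 0 := fun y hy ↦ by
    linarith [log_lt_sub_one_of_pos (inv_pos.2 hy.1) (inv_ne_one.2 hy.2.ne)]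
  simpa using lt_of_hasDerivAt_neg_on_Ioc hderiv hneg hu

lemma quadratic_sub_mul_log_neg {u : ℝ} (hu : u ∈ Ioo 0 1) :
    -1 / 2 - 2 * u + 5 / 2 * u ^ 2 - (2 * u + u ^ 2) * log u < 0 := by
  have hderiv : ∀ y ∈ Ioc (0 : ℝ) 1,
      HasDerivAt (fun y ↦ -1 / 2 - 2 * y + 5 / 2 * y ^ 2 - (2 * y + y ^ 2) * log y)
      (4 * y - 4 - (2 + 2 * y) * log y) y := by
    intro y hy
    refine (((((hasDerivAt_id' y).const_mul 2).const_sub (-1 / 2)).fun_add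
      ((hasDerivAt_pow 2 y).const_mul (5 / 2))).fun_sub
      ((((hasDerivAt_id' y).const_mul 2).fun_add (hasDerivAt_pow 2 y)).fun_mul
        (hasDerivAt_log hy.1.ne'))).congr_deriv ?_
    have := hy.1.ne'
    field_simp
    ring
  have := lt_of_hasDerivAt_pos_on_Ioc hderiv (fun y hy ↦ four_mul_sub_four_sub_mul_log_pos hy) hu
  norm_num at this
  linarith

lemma hasDerivAt_one_sub_add_mul_log {a x : ℝ} (ha : a ≠ 0) (hx : x ≠ 0) (hxa : x ≠ a) :
    HasDerivAt (fun x ↦ 1 - x + (1 / a) * (x - x ^ 2) * log (1 - a / x))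
      (-1 + (1 - 2 * x) * log (1 - a / x) / a + (1 - x) / (x - a)) x := by
  have h1 : 1 - a / x ≠ 0 := by
    rw [one_sub_div hx]; exact div_ne_zero (sub_ne_zero.2 hxa) hx
  have hlog := (((hasDerivAt_inv hx).const_mul a).const_sub 1).log h1
  refine (((hasDerivAt_id' x).const_sub 1).fun_add ((((hasDerivAt_id' x).fun_sub
    (hasDerivAt_pow 2 x)).const_mul (1 / a)).fun_mul hlog)).congr_deriv ?_
  have : x - a ≠ 0 := sub_ne_zero.2 hxa
  field_simp
  ring

lemma deriv_one_sub_add_mul_log_neg {a x : ℝ} (ha : 3 / 2 ≤ a) (hx : a < x) :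
    deriv (fun x ↦ 1 - x + (1 / a) * (x - x ^ 2) * log (1 - a / x)) x < 0 := by
  have hx0 : 0 < x := by linarith
  rw [(hasDerivAt_one_sub_add_mul_log (by linarith) hx0.ne' hx.ne').deriv]
  have hu : 1 - a / x ∈ Ioo 0 1 := by
    constructor
    · rw [sub_pos, div_lt_one hx0]; exact hx
    · linarith [show 0 < a / x by positivity]
  set u := 1 - a / x with hu_def
  have key : a ^ 2 * (x - a) * (-1 + (1 - 2 * x) * log u / a + (1 - x) / (x - a)) =
      x ^ 2 * ((-1 / 2 - 2 * u + 5 / 2 * u ^ 2 - (2 * u + u ^ 2) * log u)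
        - (a - 3 / 2) * (1 - u ^ 2 + 2 * u * log u)) := by
    have : x - a ≠ 0 := by linarith
    have : a ≠ 0 := by linarith
    rw [hu_def]
    field_simp
    ring
  have hA := one_sub_sq_add_two_mul_mul_log_pos hu
  have hB := quadratic_sub_mul_log_neg hu
  refine neg_of_mul_neg_right (a := a ^ 2 * (x - a)) ?_ (mul_pos (by positivity) (sub_pos.2 hx)).le
  rw [key]
  exact mul_neg_of_pos_of_neg (by positivity) (by linarith [mul_nonneg (sub_nonneg.2 ha) hA.le])

/-- If `a ≥ 3/2`, then `g(x) = 1 - x + (1/a)*(x - x^2)*log(1 - a/x)` is strictly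
decreasing on `(a,∞)`. -/
theorem g_strictAnti (a : ℝ) (ha : 3/2 ≤ a) :
    StrictAntiOn (fun x : ℝ => 1 - x + (1/a) * (x - x^2) * Real.log (1 - a/x))
      (Set.Ioi a) := by
  refine strictAntiOn_of_deriv_neg (convex_Ioi a) (fun x hx ↦ ?_) fun x hx ↦ ?_
  · exact (hasDerivAt_one_sub_add_mul_log (by linarith) (by linarith [mem_Ioi.1 hx])
      (ne_of_gt hx)).continuousAt.continuousWithinAt
  · rw [interior_Ioi] at hx
    exact deriv_one_sub_add_mul_log_neg ha hx
end

section
/- Let 1 < a < 3/2 and g(x) = 1-x+(1/a)(x-x²)·log(1-a/x) for x > a. Then there exists a unique x_a > a such that g is strictly decreasing on (a, x_a) and strictly increasing on (x_a, ∞). -/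
/-!
Write `g'` and `g''` for the first two derivatives of `g`. Both tend to `0` at infinity, while
`(x - a) g'(x) → 1 - a < 0` and `(x - a)² g''(x) → a - 1 > 0` as `x ↓ a`. The third derivative has
the sign of `(3 - 2a)x - a`, which changes sign once, at `a / (3 - 2a) > a`.

A function on `(a, ∞)` that first increases and then decreases towards the limit `0`, and that is
negative near `a`, is negative up to some point and positive afterwards (intermediate value
theorem). Applied to `-g''` this shows that `g''` changes sign once, from `+` to `-`; applied then
to `g'` it shows that `g'` changes sign once, from `-` to `+`, at the unique minimum point of `g`.
-/

open Real Set Filter Topology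

theorem StrictAntiOn.lt_of_tendsto_atTop {α β : Type*} [LinearOrder α] [NoMaxOrder α]
    [LinearOrder β] [TopologicalSpace β] [OrderClosedTopology β] {f : α → β} {p x : α}
    {c : β} (hf : StrictAntiOn f (Ici p)) (hlim : Tendsto f atTop (𝓝 c)) (hx : p ≤ x) :
    c < f x := by
  have : Nonempty α := ⟨x⟩
  obtain ⟨y, hxy⟩ := exists_gt x
  have hcy : c ≤ f y := le_of_tendsto hlim <| by
    filter_upwards [eventually_ge_atTop y] with z hyz
    exact hf.antitoneOn (hx.trans hxy.le) (hx.trans (hxy.le.trans hyz)) hyz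
  exact hcy.trans_lt (hf hx (hx.trans hxy.le) hxy)

theorem le_of_strictAntiOn_Ioo_of_strictMonoOn_Ioi {α β : Type*} [LinearOrder α]
    [DenselyOrdered α] [Preorder β] {f : α → β} {a y z : α} (hz : a < z)
    (hanti : StrictAntiOn f (Ioo a z)) (hmono : StrictMonoOn f (Ioi y)) : z ≤ y := by
  by_contra! hyz
  obtain ⟨u, hu, huz⟩ := exists_between (max_lt hz hyz)
  obtain ⟨v, huv, hvz⟩ := exists_between huz
  rw [max_lt_iff] at hu
  exact lt_asymm (hanti ⟨hu.1, huz⟩ ⟨hu.1.trans huv, hvz⟩ huv)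
    (hmono hu.2 (hu.2.trans huv) huv)

theorem strictMonoOn_of_hasDerivAt_pos {D : Set ℝ} (hD : Convex ℝ D) {f f' : ℝ → ℝ}
    (hf : ∀ x ∈ D, HasDerivAt f (f' x) x) (hf' : ∀ x ∈ interior D, 0 < f' x) :
    StrictMonoOn f D :=
  strictMonoOn_of_hasDerivWithinAt_pos hD
    (fun x hx => (hf x hx).continuousAt.continuousWithinAt)
    (fun x hx => (hf x (interior_subset hx)).hasDerivWithinAt) hf'

theorem strictAntiOn_of_hasDerivAt_neg {D : Set ℝ} (hD : Convex ℝ D) {f f' : ℝ → ℝ}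
    (hf : ∀ x ∈ D, HasDerivAt f (f' x) x) (hf' : ∀ x ∈ interior D, f' x < 0) :
    StrictAntiOn f D :=
  strictAntiOn_of_hasDerivWithinAt_neg hD
    (fun x hx => (hf x hx).continuousAt.continuousWithinAt)
    (fun x hx => (hf x (interior_subset hx)).hasDerivWithinAt) hf'

theorem exists_sign_change_of_strictMonoOn_of_strictAntiOn {f : ℝ → ℝ} {a p : ℝ}
    (hap : a < p) (hcont : ContinuousOn f (Ioi a)) (hmono : StrictMonoOn f (Ioc a p))
    (hanti : StrictAntiOn f (Ici p)) (hlim : Tendsto f atTop (𝓝 0))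
    (hnear : ∀ᶠ x in 𝓝[>] a, f x < 0) :
    ∃ z, a < z ∧ (∀ x ∈ Ioo a z, f x < 0) ∧ ∀ x ∈ Ioi z, 0 < f x := by
  have hpos : ∀ x, p ≤ x → 0 < f x := fun x hx => hanti.lt_of_tendsto_atTop hlim hx
  obtain ⟨b, hfb, hb⟩ := (hnear.and (Ioo_mem_nhdsGT hap)).exists
  obtain ⟨z, hz, hfz⟩ : ∃ z ∈ Ioo b p, f z = 0 :=
    intermediate_value_Ioo hb.2.le (hcont.mono fun x hx => hb.1.trans_le hx.1)
      ⟨hfb, hpos p le_rfl⟩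
  have haz : a < z := hb.1.trans hz.1
  refine ⟨z, haz, fun x hx => ?_, fun x hx => ?_⟩
  · rw [← hfz]
    exact hmono ⟨hx.1, (hx.2.trans hz.2).le⟩ ⟨haz, hz.2.le⟩ hx.2
  · rcases le_or_gt p x with hpx | hxp
    · exact hpos x hpx
    · rw [← hfz]
      exact hmono ⟨haz, hz.2.le⟩ ⟨haz.trans hx, hxp.le⟩ hx

theorem exists_sign_change_of_hasDerivAt {f f' : ℝ → ℝ} {a p : ℝ} (hap : a < p)
    (hf : ∀ x ∈ Ioi a, HasDerivAt f (f' x) x) (hf'pos : ∀ x ∈ Ioo a p, 0 < f' x)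
    (hf'neg : ∀ x ∈ Ioi p, f' x < 0) (hlim : Tendsto f atTop (𝓝 0))
    (hnear : ∀ᶠ x in 𝓝[>] a, f x < 0) :
    ∃ z, a < z ∧ (∀ x ∈ Ioo a z, f x < 0) ∧ ∀ x ∈ Ioi z, 0 < f x :=
  exists_sign_change_of_strictMonoOn_of_strictAntiOn hap
    (fun x hx => (hf x hx).continuousAt.continuousWithinAt)
    (strictMonoOn_of_hasDerivAt_pos (convex_Ioc a p) (fun x hx => hf x hx.1)
      (by rw [interior_Ioc]; exact hf'pos))
    (strictAntiOn_of_hasDerivAt_neg (convex_Ici p) (fun x hx => hf x (hap.trans_le hx))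
      (by rw [interior_Ici]; exact hf'neg))
    hlim hnear

theorem hasDerivAt_log_one_sub_div {a x : ℝ} (hx : x ≠ 0) (hxa : x ≠ a) :
    HasDerivAt (fun y => log (1 - a/y)) (a/(x*(x - a))) x := by
  have hne : 1 - a/x ≠ 0 := by
    rw [one_sub_div hx]
    exact div_ne_zero (sub_ne_zero.mpr hxa) hx
  refine ((((hasDerivAt_inv hx).const_mul a).const_sub 1).log hne).congr_deriv ?_
  field_simp

theorem tendsto_log_one_sub_div_atTop (a : ℝ) :
    Tendsto (fun x => log (1 - a/x)) atTop (𝓝 0) := by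
  have h : Tendsto (fun x => 1 - a/x) atTop (𝓝 1) := by
    simpa using tendsto_const_nhds.sub (tendsto_const_nhds.div_atTop (tendsto_id (α := ℝ)))
  simpa using h.log one_ne_zero

theorem tendsto_mul_log_one_sub_div_atTop (a : ℝ) :
    Tendsto (fun x => x * log (1 - a/x)) atTop (𝓝 (-a)) := by
  simpa [sub_eq_add_neg, neg_div] using tendsto_mul_log_one_add_div_atTop (-a)

theorem tendsto_inv_sub_atTop (a : ℝ) : Tendsto (fun x : ℝ => (x - a)⁻¹) atTop (𝓝 0) :=
  tendsto_inv_atTop_zero.comp (tendsto_atTop_add_const_right _ (-a) tendsto_id)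

theorem tendsto_sub_mul_log_one_sub_div_nhdsGT {a : ℝ} (ha : 0 < a) :
    Tendsto (fun x => (x - a) * log (1 - a/x)) (𝓝[>] a) (𝓝 0) := by
  have h := (((continuous_mul_log.comp (continuous_sub_right a)).tendsto a).sub
    (((continuous_sub_right a).continuousAt.mul (continuousAt_log ha.ne')).tendsto))
  simp only [Function.comp_apply, Pi.mul_apply, sub_self, zero_mul] at h
  refine (h.mono_left nhdsWithin_le_nhds).congr' ?_
  filter_upwards [self_mem_nhdsWithin] with x (hx : a < x)
  rw [one_sub_div (ha.trans hx).ne', log_div (sub_pos.mpr hx).ne' (ha.trans hx).ne']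
  ring

noncomputable def g (a x : ℝ) : ℝ := 1 - x + (1/a) * (x - x^2) * log (1 - a/x)

noncomputable def g' (a x : ℝ) : ℝ := -1 + ((1 - 2*x)/a) * log (1 - a/x) + (1 - x)/(x - a)

noncomputable def g'' (a x : ℝ) : ℝ :=
  -(2/a) * log (1 - a/x) + (1 - 2*x)/(x*(x - a)) + (a - 1)/(x - a)^2

section

variable {a : ℝ}

theorem hasDerivAt_g {x : ℝ} (ha : 0 < a) (hx : a < x) : HasDerivAt (g a) (g' a x) x := by
  have hx0 : 0 < x := ha.trans hx
  have hxa : 0 < x - a := by linarith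
  have hℓ := hasDerivAt_log_one_sub_div hx0.ne' hx.ne'
  refine (((hasDerivAt_id' x).const_sub 1).fun_add
    ((((hasDerivAt_id' x).fun_sub (hasDerivAt_pow 2 x)).const_mul (1/a)).fun_mul hℓ))
    |>.congr_deriv ?_
  rw [g']
  field_simp
  ring

theorem hasDerivAt_g' {x : ℝ} (ha : 0 < a) (hx : a < x) : HasDerivAt (g' a) (g'' a x) x := by
  have hx0 : 0 < x := ha.trans hx
  have hxa : 0 < x - a := by linarith
  have hℓ := hasDerivAt_log_one_sub_div hx0.ne' hx.ne'
  refine ((((((hasDerivAt_id' x).const_mul 2).const_sub 1).div_const a).fun_mul hℓ).const_add (-1)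
    |>.fun_add (((hasDerivAt_id' x).const_sub 1).fun_div ((hasDerivAt_id' x).sub_const a)
      hxa.ne')).congr_deriv ?_
  rw [g'']
  field_simp
  ring

theorem hasDerivAt_g'' {x : ℝ} (ha : 0 < a) (hx : a < x) :
    HasDerivAt (g'' a) (a*((3 - 2*a)*x - a)/(x^2*(x - a)^3)) x := by
  have hx0 : 0 < x := ha.trans hx
  have hxa : 0 < x - a := by linarith
  have hℓ := hasDerivAt_log_one_sub_div hx0.ne' hx.ne'
  refine ((hℓ.const_mul (-(2/a))).fun_add
    ((((hasDerivAt_id' x).const_mul 2).const_sub 1).fun_div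
      ((hasDerivAt_id' x).fun_mul ((hasDerivAt_id' x).sub_const a)) (by positivity))
    |>.fun_add ((hasDerivAt_const x (a - 1)).fun_div (((hasDerivAt_id' x).sub_const a).fun_pow 2)
      (by positivity))).congr_deriv ?_
  field_simp
  ring

theorem tendsto_g'_atTop (ha : a ≠ 0) : Tendsto (g' a) atTop (𝓝 0) := by
  have h := ((((tendsto_log_one_sub_div_atTop a).const_mul (1/a)).sub
    ((tendsto_mul_log_one_sub_div_atTop a).const_mul (2/a))).const_add (-1)).add
    (((tendsto_inv_sub_atTop a).const_mul (1 - a)).sub_const 1)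
  rw [show -1 + (1/a * 0 - 2/a * -a) + ((1 - a) * 0 - 1) = (0 : ℝ) by field_simp; ring] at h
  refine h.congr' ?_
  filter_upwards [eventually_gt_atTop a] with x hx
  have hxa : x - a ≠ 0 := sub_ne_zero.mpr hx.ne'
  rw [g']
  field_simp
  ring

theorem tendsto_g''_atTop : Tendsto (g'' a) atTop (𝓝 0) := by
  have h := (((tendsto_log_one_sub_div_atTop a).const_mul (-(2/a))).add
    ((tendsto_inv_atTop_zero.sub_const 2).mul (tendsto_inv_sub_atTop a))).add
    (((tendsto_inv_sub_atTop a).pow 2).const_mul (a - 1))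
  simp only [mul_zero, add_zero, zero_pow two_ne_zero] at h
  refine h.congr' ?_
  filter_upwards [eventually_gt_atTop (max a 0)] with x hx
  rw [max_lt_iff] at hx
  have hxa : x - a ≠ 0 := sub_ne_zero.mpr hx.1.ne'
  have hx0 : x ≠ 0 := hx.2.ne'
  rw [g'']
  field_simp

theorem eventually_g'_neg (ha : 1 < a) : ∀ᶠ x in 𝓝[>] a, g' a x < 0 := by
  have hx : Tendsto (fun x : ℝ => x) (𝓝[>] a) (𝓝 a) := nhdsWithin_le_nhds
  have h : Tendsto (fun x => (x - a) * g' a x) (𝓝[>] a) (𝓝 (1 - a)) := by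
    have := ((hx.sub_const a).neg.add ((((hx.const_mul 2).const_sub 1).div_const a).mul
      (tendsto_sub_mul_log_one_sub_div_nhdsGT (by linarith)))).add (hx.const_sub 1)
    simp only [sub_self, neg_zero, mul_zero, zero_add] at this
    refine this.congr' ?_
    filter_upwards [self_mem_nhdsWithin] with x (hax : a < x)
    have : x - a ≠ 0 := sub_ne_zero.mpr hax.ne'
    rw [g']
    field_simp
  filter_upwards [h.eventually_lt_const (show 1 - a < 0 by linarith), self_mem_nhdsWithin] with
    x hx (hax : a < x)
  exact neg_of_mul_neg_right hx (sub_pos.mpr hax).le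

theorem eventually_g''_pos (ha : 1 < a) : ∀ᶠ x in 𝓝[>] a, 0 < g'' a x := by
  have hx : Tendsto (fun x : ℝ => x) (𝓝[>] a) (𝓝 a) := nhdsWithin_le_nhds
  have h : Tendsto (fun x => (x - a)^2 * g'' a x) (𝓝[>] a) (𝓝 (a - 1)) := by
    have := ((((hx.sub_const a).mul (tendsto_sub_mul_log_one_sub_div_nhdsGT (by linarith)))
      |>.const_mul (-(2/a))).add
      ((((hx.const_mul 2).const_sub 1).mul (hx.sub_const a)).div hx (by linarith)))
      |>.add_const (a - 1)
    simp only [sub_self, mul_zero, zero_div, zero_add] at this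
    refine this.congr' ?_
    filter_upwards [self_mem_nhdsWithin] with x (hax : a < x)
    have : x - a ≠ 0 := sub_ne_zero.mpr hax.ne'
    have : x ≠ 0 := (by linarith : 0 < x).ne'
    rw [Pi.div_apply, g'']
    field_simp
  filter_upwards [h.eventually_const_lt (show 0 < a - 1 by linarith), self_mem_nhdsWithin] with
    x hx (hax : a < x)
  exact pos_of_mul_pos_right hx (sq_nonneg _)

theorem exists_g''_sign_change (ha : 1 < a) (ha2 : a < 3/2) :
    ∃ x₀, a < x₀ ∧ (∀ x ∈ Ioo a x₀, 0 < g'' a x) ∧ ∀ x ∈ Ioi x₀, g'' a x < 0 := by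
  have h3a : 0 < 3 - 2*a := by linarith
  have hc : a < a / (3 - 2*a) := by
    rw [lt_div_iff₀ h3a]
    nlinarith
  have hdenom : ∀ x, a < x → 0 < x^2 * (x - a)^3 := fun x hx => by
    have : 0 < x := by linarith
    have : 0 < x - a := sub_pos.mpr hx
    positivity
  have hg'''_neg : ∀ x ∈ Ioo a (a / (3 - 2*a)), a*((3 - 2*a)*x - a)/(x^2*(x - a)^3) < 0 :=
    fun x hx => div_neg_of_neg_of_pos
      (mul_neg_of_pos_of_neg (by linarith) (by nlinarith [(lt_div_iff₀ h3a).mp hx.2]))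
      (hdenom x hx.1)
  have hg'''_pos : ∀ x ∈ Ioi (a / (3 - 2*a)), 0 < a*((3 - 2*a)*x - a)/(x^2*(x - a)^3) :=
    fun x hx => div_pos (mul_pos (by linarith) (by nlinarith [(div_lt_iff₀ h3a).mp hx]))
      (hdenom x (hc.trans hx))
  obtain ⟨x₀, hx₀, hneg, hpos⟩ := exists_sign_change_of_hasDerivAt (f := fun x => -g'' a x) hc
    (fun x hx => (hasDerivAt_g'' (by linarith) hx).neg)
    (fun x hx => neg_pos.mpr (hg'''_neg x hx)) (fun x hx => neg_neg_iff_pos.mpr (hg'''_pos x hx))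
    (by simpa using tendsto_g''_atTop.neg)
    (by simpa using eventually_g''_pos ha)
  exact ⟨x₀, hx₀, fun x hx => neg_neg_iff_pos.mp (hneg x hx),
    fun x hx => neg_pos.mp (hpos x hx)⟩

theorem exists_g'_sign_change (ha : 1 < a) (ha2 : a < 3/2) :
    ∃ z, a < z ∧ (∀ x ∈ Ioo a z, g' a x < 0) ∧ ∀ x ∈ Ioi z, 0 < g' a x := by
  obtain ⟨x₀, hx₀, hpos, hneg⟩ := exists_g''_sign_change ha ha2
  exact exists_sign_change_of_hasDerivAt hx₀ (fun x hx => hasDerivAt_g' (by linarith) hx)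
    hpos hneg (tendsto_g'_atTop (by positivity)) (eventually_g'_neg ha)

end

/-- If `1 < a < 3/2`, then there exists a unique `x_a > a` such that
`g(x) = 1 - x + (1/a)*(x - x^2)*log(1 - a/x)` is strictly decreasing on `(a, x_a)` and
strictly increasing on `(x_a, ∞)`. -/
theorem g_unique_min (a : ℝ) (ha : 1 < a) (ha2 : a < 3/2) :
    ∃! xa : ℝ, a < xa ∧
      StrictAntiOn (fun x : ℝ => 1 - x + (1/a) * (x - x^2) * Real.log (1 - a/x))
        (Set.Ioo a xa) ∧
      StrictMonoOn (fun x : ℝ => 1 - x + (1/a) * (x - x^2) * Real.log (1 - a/x))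
        (Set.Ioi xa) := by
  obtain ⟨z, haz, hneg, hpos⟩ := exists_g'_sign_change ha ha2
  have hg : ∀ x ∈ Ioi a, HasDerivAt (g a) (g' a x) x :=
    fun x hx => hasDerivAt_g (by linarith) hx
  have hanti : StrictAntiOn (g a) (Ioo a z) :=
    strictAntiOn_of_hasDerivAt_neg (convex_Ioo a z) (fun x hx => hg x hx.1)
      (by rw [interior_Ioo]; exact hneg)
  have hmono : StrictMonoOn (g a) (Ioi z) :=
    strictMonoOn_of_hasDerivAt_pos (convex_Ioi z) (fun x hx => hg x (haz.trans hx))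
      (by rw [interior_Ioi]; exact hpos)
  refine ⟨z, ⟨haz, hanti, hmono⟩, fun y ⟨hay, hanti_y, hmono_y⟩ => le_antisymm ?_ ?_⟩
  · exact le_of_strictAntiOn_Ioo_of_strictMonoOn_Ioi hay hanti_y hmono
  · exact le_of_strictAntiOn_Ioo_of_strictMonoOn_Ioi haz hanti hmono_y
end

section
/- If a ≥ 2, then for all r ∈ (1-1/a, 1), m(r) = -r/(1-r) - (1/a)·(r/(1-r)²)·log(1-a(1-r)) satisfies m(r) > a/2 ≥ 1. -/
open Real

/-! With `s = 1 - r` and `t = a s ∈ (0, 1)` one has `m(r) = (1 - s)(-log (1 - t) - t) / (a s²)`,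
so the claim is `t² / 2 < (1 - s)(-log (1 - t) - t)`. As `s ≤ t / 2`, it suffices that
`-log (1 - t) > 2 t / (2 - t)`, which is the classical bound `log (1 + x) > 2 x / (x + 2)`
at `1 + x = 1 / (1 - t)`. -/

lemma two_mul_div_two_sub_lt_neg_log_one_sub {t : ℝ} (ht0 : 0 < t) (ht1 : t < 1) :
    2 * t / (2 - t) < -log (1 - t) := by
  have h1t : 0 < 1 - t := by linarith
  have h2t : 0 < 2 - t := by linarith
  have hx : 0 < t / (1 - t) := div_pos ht0 h1t
  have h := lt_log_one_add_of_pos hx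
  have hlhs : 2 * (t / (1 - t)) / (t / (1 - t) + 2) = 2 * t / (2 - t) := by
    field_simp
    ring
  have hrhs : log (1 + t / (1 - t)) = -log (1 - t) := by
    rw [← log_inv]
    congr 1
    field_simp
    ring
  rwa [hlhs, hrhs] at h

lemma sq_div_two_lt_one_sub_mul_neg_log_one_sub_sub {s t : ℝ} (hs : 0 < s) (hst : 2 * s ≤ t)
    (ht1 : t < 1) : t ^ 2 / 2 < (1 - s) * (-log (1 - t) - t) := by
  have h2t : 0 < 2 - t := by linarith
  have hlog : 2 * t < -log (1 - t) * (2 - t) :=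
    (div_lt_iff₀ h2t).mp (two_mul_div_two_sub_lt_neg_log_one_sub (by linarith) ht1)
  have hgap : t ^ 2 < (2 - t) * (-log (1 - t) - t) := by nlinarith
  have hgap_nonneg : 0 ≤ -log (1 - t) - t := by nlinarith
  calc t ^ 2 / 2 < (1 - t / 2) * (-log (1 - t) - t) := by linarith
    _ ≤ (1 - s) * (-log (1 - t) - t) := by gcongr; linarith

lemma neg_div_one_sub_sub_log_eq {a r : ℝ} (ha : a ≠ 0) (hr : r ≠ 1) :
    -r / (1 - r) - (1/a) * (r / (1 - r)^2) * log (1 - a * (1 - r)) =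
      r * (-log (1 - a * (1 - r)) - a * (1 - r)) / (a * (1 - r) ^ 2) := by
  have hr' : 1 - r ≠ 0 := sub_ne_zero.mpr hr.symm
  field_simp
  ring

/-- If `a ≥ 2`, then for all `r ∈ (1-1/a, 1)`,
`m(r) = -r/(1-r) - (1/a)*(r/(1-r)^2)*log(1-a*(1-r))` satisfies `m(r) > a/2 ≥ 1`. -/
theorem m_gt_one_of_a_ge_two (a r : ℝ) (ha : 2 ≤ a) (hr : r ∈ Set.Ioo (1 - 1/a) 1) :
    a/2 < -r / (1 - r) - (1/a) * (r / (1 - r)^2) * Real.log (1 - a * (1 - r)) ∧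
    1 ≤ a/2 := by
  obtain ⟨hr1, hr2⟩ := hr
  have ha0 : 0 < a := by linarith
  have hs : 0 < 1 - r := by linarith
  have ht : a * (1 - r) < 1 := by
    have := (lt_div_iff₀' ha0).mp (show 1 - r < 1 / a by linarith)
    linarith
  have key := sq_div_two_lt_one_sub_mul_neg_log_one_sub_sub hs (by nlinarith) ht
  rw [sub_sub_cancel] at key
  refine ⟨?_, by linarith⟩
  rw [neg_div_one_sub_sub_log_eq ha0.ne' hr2.ne, lt_div_iff₀ (by positivity)]
  linarith
end

section
/- If 3/2 ≤ a < 2, then there exists a unique r_c ∈ (1-1/a, 1) such that m(r_c) = 1, m(r) > 1 for r ∈ (1-1/a, r_c), and m(r) < 1 for r ∈ (r_c, 1), where m(r) = -r/(1-r) - (1/a)·(r/(1-r)²)·log(1-a(1-r)). -/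
open Real Set

/-!
Substituting `x = 1/(1-r)` turns `m` into
`g x = 1 - x + (x - x²)/a · log (1 - a/x)` on `(a, ∞)`. Bounding `-log (1 - t)` at `t = a/x` by
its Taylor polynomial with remainder `t⁴/(4(1-t))` gives
`g' x ≤ -a (2(2a-3)x² + 2a(a-1)x - a²) / (12 x³ (x-a)) < 0` for `a ≥ 3/2`, so `m` is strictly
decreasing. Finally `g (21a/20) > 1` because `log 21 ≥ 3`, and at `x = a + 4a²/(3(2-a))` the
third-order bound gives `g x < a/2 + a²/(3(x-a)) = 1/2 + a/4 < 1`; the intermediate value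
theorem supplies the crossing.
-/

lemma neg_log_one_sub_le {t : ℝ} (h0 : 0 ≤ t) (h1 : t < 1) :
    -log (1 - t) ≤ t + t^2/2 + t^3/3 + t^4/(4*(1-t)) := by
  set f : ℝ → ℝ := fun s => s + s^2/2 + s^3/3 + s^4/(4*(1-s)) + log (1-s) with hf
  have hder : ∀ s < 1, HasDerivAt f (s^4/(4*(1-s)^2)) s := by
    intro s hs
    have h1s : 1 - s ≠ 0 := by linarith
    have hsub := (hasDerivAt_id s).const_sub 1
    have := ((((hasDerivAt_id s).add ((hasDerivAt_pow 2 s).div_const 2)).add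
      ((hasDerivAt_pow 3 s).div_const 3)).add
      ((hasDerivAt_pow 4 s).div (hsub.const_mul 4) (by simpa using h1s))).add (hsub.log h1s)
    refine this.congr_deriv ?_
    simp only [id]
    field_simp
    ring
  have hmono : MonotoneOn f (Ico 0 1) := by
    refine monotoneOn_of_deriv_nonneg (convex_Ico 0 1)
      (fun x hx => (hder x hx.2).continuousAt.continuousWithinAt) ?_ ?_
    all_goals
      intro x hx
      rw [interior_Ico] at hx
    · exact (hder x hx.2).differentiableAt.differentiableWithinAt
    · rw [(hder x hx.2).deriv]
      positivity
  have := hmono ⟨le_rfl, zero_lt_one⟩ ⟨h0, h1⟩ h0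
  simp only [hf] at this
  norm_num at this
  linarith

lemma existsUnique_crossing_of_strictAntiOn {f : ℝ → ℝ} {l u p q y : ℝ}
    (hf : StrictAntiOn f (Ioo l u)) (hfc : ContinuousOn f (Ioo l u))
    (hp : p ∈ Ioo l u) (hq : q ∈ Ioo l u) (hpy : y < f p) (hqy : f q < y) :
    ∃! c, c ∈ Ioo l u ∧ f c = y ∧ (∀ r ∈ Ioo l c, y < f r) ∧ ∀ r ∈ Ioo c u, f r < y := by
  have hpq : p < q := (hf.lt_iff_gt hq hp).1 (hqy.trans hpy)
  have hsub : Icc p q ⊆ Ioo l u := fun r hr => ⟨hp.1.trans_le hr.1, hr.2.trans_lt hq.2⟩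
  obtain ⟨c, hcpq, hcy⟩ := intermediate_value_Icc' hpq.le (hfc.mono hsub) ⟨hqy.le, hpy.le⟩
  have hc := hsub hcpq
  refine ⟨c, ⟨hc, hcy, fun r hr => ?_, fun r hr => ?_⟩,
    fun d hd => hf.injOn hd.1 hc (hd.2.1.trans hcy.symm)⟩
  · exact hcy ▸ hf ⟨hr.1, hr.2.trans hc.2⟩ hc hr.2
  · exact hcy ▸ hf hc ⟨hc.1.trans hr.1, hr.2⟩ hr.1

namespace CriticalR

variable {a x : ℝ}

noncomputable def m (a r : ℝ) : ℝ :=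
  -r / (1 - r) - (1/a) * (r / (1 - r)^2) * log (1 - a * (1 - r))

noncomputable def g (a x : ℝ) : ℝ :=
  1 - x + (1/a) * (x - x^2) * log (1 - a/x)

lemma m_eq_g {r : ℝ} (hr : r ≠ 1) : m a r = g a (1 / (1 - r)) := by
  have h1r : 1 - r ≠ 0 := sub_ne_zero.2 hr.symm
  rw [m, g, one_div (1 - r), div_inv_eq_mul]
  field_simp
  ring

lemma hasDerivAt_g (ha : 0 < a) (hx : a < x) :
    HasDerivAt (g a) (-1 + (1/a) * (1 - 2*x) * log (1 - a/x) + (1 - x)/(x - a)) x := by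
  have hx0 : x ≠ 0 := (ha.trans hx).ne'
  have hlog : 1 - a/x ≠ 0 := by
    have : a/x < 1 := (div_lt_one (ha.trans hx)).2 hx
    linarith
  have hxa : x - a ≠ 0 := sub_ne_zero.2 hx.ne'
  have := ((hasDerivAt_id x).const_sub 1).add
    ((((hasDerivAt_id x).sub (hasDerivAt_pow 2 x)).const_mul (1/a)).mul
      (((hasDerivAt_inv hx0).const_mul a).const_sub 1 |>.log hlog))
  refine this.congr_deriv ?_
  simp only [id, Pi.sub_apply, ← div_eq_mul_inv]
  field_simp
  ring

lemma deriv_g_neg (ha : 3/2 ≤ a) (hx : a < x) : deriv (g a) x < 0 := by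
  have ha0 : 0 < a := by linarith
  have hx0 : 0 < x := ha0.trans hx
  have hxa : 0 < x - a := sub_pos.2 hx
  have ht : a/x < 1 := (div_lt_one hx0).2 hx
  have htaylor : (1/a) * (1 - 2*x) * log (1 - a/x) ≤
      (2*x - 1)/a * (a/x + (a/x)^2/2 + (a/x)^3/3 + (a/x)^4/(4*(1 - a/x))) := by
    rw [show (1/a) * (1 - 2*x) * log (1 - a/x) = (2*x - 1)/a * -log (1 - a/x) by ring]
    exact mul_le_mul_of_nonneg_left (neg_log_one_sub_le (by positivity) ht)
      (div_pos (by linarith) ha0).le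
  have hid : (2*x - 1)/a * (a/x + (a/x)^2/2 + (a/x)^3/3 + (a/x)^4/(4*(1 - a/x)))
      = 1 + (x - 1)/(x - a) - a * (2*(2*a - 3)*x^2 + 2*a*(a - 1)*x - a^2)/(12*x^3*(x - a)) := by
    field_simp
    ring
  -- `2*a*(a-1)*x > 2*a^2*(a-1) ≥ a^2` because `a ≥ 3/2`
  have hnum : 0 < 2*(2*a - 3)*x^2 + 2*a*(a - 1)*x - a^2 := by
    nlinarith [mul_nonneg (mul_nonneg (by linarith : (0:ℝ) ≤ 2*a - 3) hxa.le) hx0.le,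
      mul_pos ha0 hxa, mul_pos (mul_pos ha0 ha0) hxa]
  have hrem : 0 < a * (2*(2*a - 3)*x^2 + 2*a*(a - 1)*x - a^2)/(12*x^3*(x - a)) := by positivity
  rw [(hasDerivAt_g ha0 hx).deriv]
  rw [show (1 - x)/(x - a) = -((x - 1)/(x - a)) by ring]
  linarith

lemma g_strictAntiOn (ha : 3/2 ≤ a) : StrictAntiOn (g a) (Ioi a) :=
  strictAntiOn_of_deriv_neg (convex_Ioi a)
    (fun _ hx => (hasDerivAt_g (by linarith) hx).continuousAt.continuousWithinAt)
    (fun _ hx => deriv_g_neg ha (by rwa [interior_Ioi] at hx))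

lemma three_le_log_21 : (3:ℝ) ≤ log 21 := by
  rw [le_log_iff_exp_le (by norm_num), show (3:ℝ) = 1 + 1 + 1 by norm_num, exp_add, exp_add]
  nlinarith [exp_one_lt_d9, exp_pos 1]

lemma one_lt_g (ha : 3/2 ≤ a) : 1 < g a (21*a/20) := by
  have ha0 : 0 < a := by linarith
  have harg : 1 - a/(21*a/20) = 21⁻¹ := by field_simp; norm_num
  have hcoef : (1/a) * (21*a/20 - (21*a/20)^2) = 21/20 * (1 - 21*a/20) := by field_simp
  rw [g, harg, hcoef, log_inv]
  nlinarith [mul_nonneg (by linarith : (0:ℝ) ≤ 21*a/20 - 1) (sub_nonneg.2 three_le_log_21)]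

lemma g_lt_one (ha : 1 ≤ a) (ha2 : a < 2) : g a (a + 4*a^2/(3*(2 - a))) < 1 := by
  set x := a + 4*a^2/(3*(2 - a)) with hx
  have ha0 : 0 < a := by linarith
  have hxa : x - a = 4*a^2/(3*(2 - a)) := by rw [hx]; ring
  have h2a : 0 < 2 - a := by linarith
  have hxa0 : 0 < x - a := by rw [hxa]; positivity
  have hx0 : 0 < x := by linarith
  have hx1 : 1 < x := by linarith
  have ht0 : 0 < a/x := by positivity
  have ht1 : a/x < 1 := (div_lt_one hx0).2 (by linarith)
  have hlog : -log (1 - a/x) ≤ a/x + (a/x)^2/2 + (a/x)^3/(3*(1 - a/x)) := by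
    have h1t : 0 < 1 - a/x := by linarith
    have hgap : (a/x)^3/(3*(1 - a/x)) - ((a/x)^3/3 + (a/x)^4/(4*(1 - a/x)))
        = (a/x)^4/(12*(1 - a/x)) := by
      field_simp
      ring
    have : 0 ≤ (a/x)^4/(12*(1 - a/x)) := by positivity
    linarith [neg_log_one_sub_le ht0.le ht1]
  have hhalf : a*(x - 1)/(2*x) < a/2 := by
    rw [div_lt_div_iff₀ (by positivity) (by norm_num)]
    nlinarith
  have hthird : a^2*(x - 1)/(3*x*(x - a)) < a^2/(3*(x - a)) := by
    rw [div_lt_div_iff₀ (by positivity) (by positivity)]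
    nlinarith [mul_pos (mul_pos ha0 ha0) hxa0]
  calc g a x = 1 - x + x*(x - 1)/a * -log (1 - a/x) := by rw [g]; ring
    _ ≤ 1 - x + x*(x - 1)/a * (a/x + (a/x)^2/2 + (a/x)^3/(3*(1 - a/x))) := by
      gcongr
    _ = a*(x - 1)/(2*x) + a^2*(x - 1)/(3*x*(x - a)) := by
      field_simp
      ring
    _ < a/2 + a^2/(3*(x - a)) := add_lt_add hhalf hthird
    _ = a/2 + (2 - a)/4 := by rw [hxa]; field_simp
    _ < 1 := by linarith

lemma one_sub_inv_mem (ha : 0 < a) (hx : a < x) : 1 - 1/x ∈ Ioo (1 - 1/a) 1 :=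
  ⟨by linarith [one_div_lt_one_div_of_lt ha hx], by linarith [one_div_pos.2 (ha.trans hx)]⟩

lemma one_div_one_sub_mem (ha : 0 < a) {r : ℝ} (hr : r ∈ Ioo (1 - 1/a) 1) :
    1/(1 - r) ∈ Ioi a := by
  have h1r : 0 < 1 - r := by linarith [hr.2]
  rw [mem_Ioi, lt_div_iff₀ h1r, ← lt_div_iff₀' ha]
  linarith [hr.1]

lemma m_one_sub_inv (hx : x ≠ 0) : m a (1 - 1/x) = g a x := by
  rw [m_eq_g (by simpa using hx), sub_sub_cancel, one_div_one_div]

lemma m_strictAntiOn (ha : 3/2 ≤ a) : StrictAntiOn (m a) (Ioo (1 - 1/a) 1) := by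
  have hmono : StrictMonoOn (fun r : ℝ => 1/(1 - r)) (Ioo (1 - 1/a) 1) :=
    fun r _ s hs hrs => one_div_lt_one_div_of_lt (by linarith [hs.2]) (by linarith)
  exact ((g_strictAntiOn ha).comp_strictMonoOn hmono
    (fun r hr => one_div_one_sub_mem (by linarith) hr)).congr
    (fun r hr => (m_eq_g hr.2.ne).symm)

lemma m_continuousOn (ha : 0 < a) : ContinuousOn (m a) (Ioo (1 - 1/a) 1) := by
  have hg : ContinuousOn (g a) (Ioi a) :=
    fun _ hx => (hasDerivAt_g ha hx).continuousAt.continuousWithinAt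
  have hinv : ContinuousOn (fun r : ℝ => 1/(1 - r)) (Ioo (1 - 1/a) 1) :=
    continuousOn_const.div (by fun_prop) (fun r hr => by linarith [hr.2])
  exact (hg.comp hinv (fun r hr => one_div_one_sub_mem ha hr)).congr
    (fun r hr => m_eq_g hr.2.ne)

end CriticalR

/-- If `3/2 ≤ a < 2`, then there exists a unique `r_c ∈ (1-1/a, 1)` such that
`m(r_c) = 1`, `m(r) > 1` for `r ∈ (1-1/a, r_c)` and `m(r) < 1` for `r ∈ (r_c, 1)`,
where `m(r) = -r/(1-r) - (1/a)*(r/(1-r)^2)*log(1-a*(1-r))`. -/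
theorem critical_r_exists (a : ℝ) (ha : 3/2 ≤ a) (ha2 : a < 2) :
    ∃! rc : ℝ, rc ∈ Set.Ioo (1 - 1/a) 1 ∧
      (-rc / (1 - rc) - (1/a) * (rc / (1 - rc)^2) * Real.log (1 - a * (1 - rc)) = 1) ∧
      (∀ r ∈ Set.Ioo (1 - 1/a) rc,
        1 < -r / (1 - r) - (1/a) * (r / (1 - r)^2) * Real.log (1 - a * (1 - r))) ∧
      (∀ r ∈ Set.Ioo rc 1,
        -r / (1 - r) - (1/a) * (r / (1 - r)^2) * Real.log (1 - a * (1 - r)) < 1) := by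
  have ha0 : 0 < a := by linarith
  have hx₁ : a < 21*a/20 := by linarith
  have hx₂ : a < a + 4*a^2/(3*(2 - a)) := by
    have : 0 < 2 - a := by linarith
    have : 0 < 4*a^2/(3*(2 - a)) := by positivity
    linarith
  exact existsUnique_crossing_of_strictAntiOn
    (CriticalR.m_strictAntiOn ha) (CriticalR.m_continuousOn ha0)
    (CriticalR.one_sub_inv_mem ha0 hx₁) (CriticalR.one_sub_inv_mem ha0 hx₂)
    ((CriticalR.one_lt_g ha).trans_eq (CriticalR.m_one_sub_inv (by linarith)).symm)
    ((CriticalR.m_one_sub_inv (by linarith)).trans_lt (CriticalR.g_lt_one (by linarith) ha2))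
end
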